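/- arXiv:2603.12188 — 3 statements merged into one kernel-verified Lean document; each statement's English description precedes it below -/
import Mathlib

section
/- Define a 'lock state' as a triple of booleans (rlock, alock, ilock) per fluent, initially all true. An instantaneous action a with read set R(a), assign set A(a), and increase set I(a) is lock-applicable in a lock state L if for all f ∈ R(a), alock_f ∧ ilock_f holds; for all f ∈ A(a), rlock_f ∧ alock_f ∧ ilock_f holds; and for all f ∈ I(a), rlock_f ∧ alock_f holds. Applying a sets rlock_f := false for f ∈ R(a), alock_f := false for f ∈ A(a), ilock_f := false for f ∈ I(a). Then: if a sequence of actions b_0, ..., b_k is executed from the all-true lock state with each b_i lock-applicable in the state resulting from b_0, ..., b_{i-1}, then for all i ≠ j, R(b_i) ∩ (A(b_j) ∪ I(b_j)) = ∅, R(b_j) ∩ (A(b_i) ∪ I(b_i)) = ∅, and A(b_i) ∩ A(b_j) = ∅. -/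
/-! A lock is still set after the first `n` actions exactly when none of them touched the
corresponding fluent set, so for a pair `i < j` the lock-applicability check of the later
action `b j` alone excludes every conflict with `b i`. -/

/-- An instantaneous action, abstracted by its read, assigned and increased fluents. -/
structure LockAction (F : Type*) where
  R : Set F
  A : Set F
  I : Set F

/-- A lock state: for every fluent, the three locks `rlock`, `alock`, `ilock`. -/
structure LockState (F : Type*) where
  rlock : F → Bool
  alock : F → Bool
  ilock : F → Bool

/-- The all-true initial lock state. -/
def LockState.init (F : Type*) : LockState F :=
  ⟨fun _ => true, fun _ => true, fun _ => true⟩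

/-- Lock-applicability of an action in a lock state. -/
def lockApplicable {F : Type*} (L : LockState F) (a : LockAction F) : Prop :=
  (∀ f ∈ a.R, L.alock f = true ∧ L.ilock f = true) ∧
  (∀ f ∈ a.A, L.rlock f = true ∧ L.alock f = true ∧ L.ilock f = true) ∧
  (∀ f ∈ a.I, L.rlock f = true ∧ L.alock f = true)

open Classical in
/-- Lock effects of applying an action. -/
noncomputable def lockApply {F : Type*} (a : LockAction F) (L : LockState F) :
    LockState F where
  rlock f := if f ∈ a.R then false else L.rlock f
  alock f := if f ∈ a.A then false else L.alock f
  ilock f := if f ∈ a.I then false else L.ilock f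

/-- Lock state after executing the first `i` actions of `b` from the initial state. -/
noncomputable def lockRun {F : Type*} (b : ℕ → LockAction F) : ℕ → LockState F
  | 0 => LockState.init F
  | i + 1 => lockApply (b i) (lockRun b i)


section

variable {F : Type*} (b : ℕ → LockAction F) {n : ℕ} {f : F}

theorem lockRun_rlock_eq_true_iff : (lockRun b n).rlock f = true ↔ ∀ i < n, f ∉ (b i).R := by
  induction n with
  | zero => simp [lockRun, LockState.init]
  | succ n ih =>
    rw [Nat.forall_lt_succ_right, ← ih]
    by_cases h : f ∈ (b n).R <;> simp [lockRun, lockApply, h]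

theorem lockRun_alock_eq_true_iff : (lockRun b n).alock f = true ↔ ∀ i < n, f ∉ (b i).A := by
  induction n with
  | zero => simp [lockRun, LockState.init]
  | succ n ih =>
    rw [Nat.forall_lt_succ_right, ← ih]
    by_cases h : f ∈ (b n).A <;> simp [lockRun, lockApply, h]

theorem lockRun_ilock_eq_true_iff : (lockRun b n).ilock f = true ↔ ∀ i < n, f ∉ (b i).I := by
  induction n with
  | zero => simp [lockRun, LockState.init]
  | succ n ih =>
    rw [Nat.forall_lt_succ_right, ← ih]
    by_cases h : f ∈ (b n).I <;> simp [lockRun, lockApply, h]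

theorem lockApplicable_lockRun_iff {j : ℕ} :
    lockApplicable (lockRun b j) (b j) ↔ ∀ i < j,
      (∀ f ∈ (b j).R, f ∉ (b i).A ∧ f ∉ (b i).I) ∧
      (∀ f ∈ (b j).A, f ∉ (b i).R ∧ f ∉ (b i).A ∧ f ∉ (b i).I) ∧
      (∀ f ∈ (b j).I, f ∉ (b i).R ∧ f ∉ (b i).A) := by
  simp only [lockApplicable, lockRun_rlock_eq_true_iff, lockRun_alock_eq_true_iff,
    lockRun_ilock_eq_true_iff]
  grind

theorem nonInterfering_of_lockApplicable_of_lt {i j : ℕ} (hij : i < j)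
    (hj : lockApplicable (lockRun b j) (b j)) :
    (b i).R ∩ ((b j).A ∪ (b j).I) = ∅ ∧
    (b j).R ∩ ((b i).A ∪ (b i).I) = ∅ ∧
    (b i).A ∩ (b j).A = ∅ := by
  obtain ⟨hR, hA, hI⟩ := (lockApplicable_lockRun_iff b).1 hj i hij
  simp only [Set.eq_empty_iff_forall_notMem, Set.mem_inter_iff, Set.mem_union]
  grind

end

/-- Soundness of the lock mechanism: if every action in the sequence is
lock-applicable in the lock state produced by its predecessors, then the
actions are pairwise non-interfering. -/
theorem stmt_2 {F : Type*} (k : ℕ) (b : ℕ → LockAction F)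
    (happ : ∀ i ≤ k, lockApplicable (lockRun b i) (b i)) :
    ∀ i ≤ k, ∀ j ≤ k, i ≠ j →
      (b i).R ∩ ((b j).A ∪ (b j).I) = ∅ ∧
      (b j).R ∩ ((b i).A ∪ (b i).I) = ∅ ∧
      (b i).A ∩ (b j).A = ∅ := by
  intro i hi j hj hij
  rcases Nat.lt_or_gt_of_ne hij with hlt | hgt
  · exact nonInterfering_of_lockApplicable_of_lt b hlt (happ j hj)
  · obtain ⟨hRA, hAR, hAA⟩ := nonInterfering_of_lockApplicable_of_lt b hgt (happ i hi)
    exact ⟨hAR, hRA, Set.inter_comm (b i).A (b j).A ▸ hAA⟩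
end

section
/- Clock correctness: in the compiled problem, if action ā^⊢ for durative action a is executed at time t_s (setting clock_a := 0 and running_a := true), the process p̄_a increases clock_a with derivative 1 while running_a holds, and ā^⊣ is executed at time t_e > t_s with no intervening execution of ā^⊢, then at the time of ā^⊣ the value of clock_a equals t_e − t_s; hence the precondition lb(a) ≤ clock_a ≤ ub(a) of ā^⊣ implies lb(a) ≤ t_e − t_s ≤ ub(a). -/
theorem eq_add_nsmul_of_forall_succ_eq_add {M : Type*} [AddMonoid M] (f : ℕ → M) (d : M)
    {a b : ℕ} (hab : a ≤ b) (hf : ∀ j, a ≤ j → j < b → f (j + 1) = f j + d) :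
    f b = f a + (b - a) • d := by
  obtain ⟨k, rfl⟩ := Nat.exists_eq_add_of_le hab
  induction k with
  | zero => simp
  | succ k ih =>
    have hstep := hf (a + k) (Nat.le_add_right a k) (by omega)
    rw [← add_assoc, hstep, ih (by omega) fun j hj hjb ↦ hf j hj (by omega)]
    simp only [Nat.add_sub_cancel_left, succ_nsmul, add_assoc]

theorem stmt_10_general (δ : ℚ) (js je : ℕ) (hle : js ≤ je)
    (clock : ℕ → ℚ) (running : ℕ → Prop)
    (h0 : clock js = 0)
    (hrun : ∀ j, js ≤ j → j < je → running j)
    (hstep : ∀ j, js ≤ j → j < je → running j → clock (j + 1) = clock j + δ)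
    (ts te lb ub : ℚ) (hts : ts = (js : ℚ) * δ) (hte : te = (je : ℚ) * δ) :
    clock je = te - ts ∧
    (lb ≤ clock je → clock je ≤ ub → lb ≤ te - ts ∧ te - ts ≤ ub) := by
  have hclock : clock je = te - ts := by
    rw [eq_add_nsmul_of_forall_succ_eq_add clock δ hle
      fun j hj hje ↦ hstep j hj hje (hrun j hj hje), h0, zero_add, nsmul_eq_mul,
      Nat.cast_sub hle, hte, hts, sub_mul]
  exact ⟨hclock, fun hlb hub ↦ ⟨hclock ▸ hlb, hclock ▸ hub⟩⟩

/-- Clock correctness: if `clock_a` is reset to `0` at step `j_s = t_s / δ`,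
`running_a` holds from step `j_s` up to step `j_e = t_e / δ`, and the process
`p̄_a` adds `δ` to the clock at every step transition while `running_a` holds,
then at step `j_e` the clock equals `t_e - t_s`; hence the duration-bound
precondition `lb ≤ clock_a ≤ ub` of `ā^⊣` implies `lb ≤ t_e - t_s ≤ ub`. -/
theorem stmt_10 (δ : ℚ) (hδ : 0 < δ) (js je : ℕ) (hle : js ≤ je)
    (clock : ℕ → ℚ) (running : ℕ → Prop)
    (h0 : clock js = 0)
    (hrun : ∀ j, js ≤ j → j < je → running j)
    (hstep : ∀ j, js ≤ j → j < je → running j → clock (j + 1) = clock j + δ)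
    (ts te lb ub : ℚ) (hts : ts = (js : ℚ) * δ) (hte : te = (je : ℚ) * δ) :
    clock je = te - ts ∧
    (lb ≤ clock je → clock je ≤ ub → lb ≤ te - ts ∧ te - ts ≤ ub) :=
  stmt_10_general δ js je hle clock running h0 hrun hstep ts te lb ub hts hte
end

section
/- Expire events prune over-long prefixes: if a ∈ A^var is started at step j_s and not terminated (running_a stays true) through step j with (j − j_s)·δ > ub(a), then the event (ok ∧ running_a ∧ clock_a > ub(a), {ok := false}) is applicable at step j, and in any valid plan (which requires ok in the goal and ok is monotone) every started variable-duration action must be terminated within ub(a) time of its start. -/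
/-!
While the action runs, its clock grows by `δ` per step from `0`, so at step `je` it reads
`(je - js) · δ`. Were this above `ub`, the expire event would make `ok` false at `je`, and
since `ok` is never restored it would still be false at the final step, where the plan
requires it.
-/

theorem eq_sub_mul_of_succ_eq_add {R : Type*} [Ring R] {f : ℕ → R} {δ : R} {a b : ℕ}
    (h0 : f a = 0) (hstep : ∀ j, a ≤ j → j < b → f (j + 1) = f j + δ)
    {j : ℕ} (haj : a ≤ j) (hjb : j ≤ b) : f j = ((j : R) - a) * δ := by
  induction j, haj using Nat.le_induction with
  | base => simp [h0]
  | succ j haj ih =>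
    rw [hstep j haj hjb, ih (Nat.le_of_succ_le hjb), Nat.cast_succ, add_sub_right_comm,
      add_one_mul]

theorem stmt_18_general (δ ub lb : ℚ) (js je m : ℕ)
    (hle : js ≤ je) (hjm : je ≤ m)
    (clock : ℕ → ℚ) (running ok : ℕ → Prop)
    (hclock0 : clock js = 0)
    (hrun : ∀ j, js ≤ j → j ≤ je → running j)
    (hstep : ∀ j, js ≤ j → j < je → clock (j + 1) = clock j + δ)
    (hexpire : ∀ j, running j → clock j > ub → ¬ ok j)
    (hmono : ∀ j, ¬ ok j → ¬ ok (j + 1))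
    (hfinal : ok m) :
    (je : ℚ) * δ - (js : ℚ) * δ ≤ ub ∧
    (lb ≤ clock je →
      lb ≤ (je : ℚ) * δ - (js : ℚ) * δ ∧ (je : ℚ) * δ - (js : ℚ) * δ ≤ ub) := by
  have hclock : clock je = (je : ℚ) * δ - (js : ℚ) * δ := by
    rw [eq_sub_mul_of_succ_eq_add hclock0 hstep hle le_rfl, sub_mul]
  have hok : ok je :=
    (antitone_nat_of_succ_le (f := ok) (fun j => not_imp_not.mp (hmono j)) hjm : ok m → ok je)
      hfinal
  have hub : clock je ≤ ub := not_lt.mp fun h => hexpire je (hrun je hle le_rfl) h hok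
  rw [← hclock]
  exact ⟨hub, fun hlb => ⟨hlb, hub⟩⟩

/-- Expire events prune over-long prefixes: `a` starts at step `js`
(`clock_a = 0`) and is running through step `je` with the clock increased by
`δ` per step; the expire event (precondition `ok ∧ running_a ∧ clock_a > ub`,
effect `ok := false`) is applied during event completion, so in any
event-completed state with `running_a` and `clock_a > ub` the flag `ok` is
false; `ok` is monotone and required at the final step `m ≥ je`. Then the
action is terminated within `ub` of its start: `je·δ - js·δ ≤ ub`. Moreover,
if additionally `lb ≤ clock_a` holds at step `je` (precondition of `ā^⊣`), the
duration lies in `[lb, ub]`. -/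
theorem stmt_18 (δ ub lb : ℚ) (hδ : 0 < δ) (js je m : ℕ)
    (hle : js ≤ je) (hjm : je ≤ m)
    (clock : ℕ → ℚ) (running ok : ℕ → Prop)
    (hclock0 : clock js = 0)
    (hrun : ∀ j, js ≤ j → j ≤ je → running j)
    (hstep : ∀ j, js ≤ j → j < je → clock (j + 1) = clock j + δ)
    (hexpire : ∀ j, running j → clock j > ub → ¬ ok j)
    (hmono : ∀ j, ¬ ok j → ¬ ok (j + 1))
    (hfinal : ok m) :
    (je : ℚ) * δ - (js : ℚ) * δ ≤ ub ∧
    (lb ≤ clock je →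
      lb ≤ (je : ℚ) * δ - (js : ℚ) * δ ∧ (je : ℚ) * δ - (js : ℚ) * δ ≤ ub) :=
  stmt_18_general δ ub lb js je m hle hjm clock running ok hclock0 hrun hstep hexpire hmono hfinal
end
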